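/- arXiv:1903.09084 — 2 statements merged into one kernel-verified Lean document; each statement's English description precedes it below -/
import Mathlib

section
/- Privacy-level monotonicity of the flip probability (key step of the One Bit Cluster theorem): Let p₁, p₂ ∈ [0, 1], ε ≥ 0, and suppose α ∈ [0, 1/2] satisfies the two-sided privacy constraints exp(−ε)·(p₂(1−α)+(1−p₂)α) ≤ p₁(1−α)+(1−p₁)α ≤ exp(ε)·(p₂(1−α)+(1−p₂)α) and exp(−ε)·((1−p₂)(1−α)+p₂α) ≤ (1−p₁)(1−α)+p₁α ≤ exp(ε)·((1−p₂)(1−α)+p₂α). Then every α' with α ≤ α' ≤ 1/2 also satisfies the same constraints (with α replaced by α'). -/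
/-!
Each output probability `p (1 - α) + (1 - p) α` of the bit-flipping mechanism is affine in `α`
and equals `1/2` at `α = 1/2`, where the four constraints reduce to `exp (-ε) ≤ 1 ≤ exp ε`.
Every constraint is the nonnegativity of an affine function of the flip probability, so,
holding at `α` and at `1/2`, it holds on the whole segment between them.
-/

/-- The two-sided privacy constraints at level `ε` for an edge between Bernoulli
profiles with parameters `p₁` and `p₂`, under flip probability `α`: both output
probabilities under `p₁` lie within a multiplicative factor `exp (±ε)` of the
corresponding output probabilities under `p₂`. -/
def PrivConstraints (ε p₁ p₂ α : ℝ) : Prop :=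
  Real.exp (-ε) * (p₂ * (1 - α) + (1 - p₂) * α) ≤ p₁ * (1 - α) + (1 - p₁) * α ∧
  p₁ * (1 - α) + (1 - p₁) * α ≤ Real.exp ε * (p₂ * (1 - α) + (1 - p₂) * α) ∧
  Real.exp (-ε) * ((1 - p₂) * (1 - α) + p₂ * α) ≤ (1 - p₁) * (1 - α) + p₁ * α ∧
  (1 - p₁) * (1 - α) + p₁ * α ≤ Real.exp ε * ((1 - p₂) * (1 - α) + p₂ * α)

lemma affine_nonneg_of_mem_Icc {a b x y z : ℝ} (hx : 0 ≤ a + b * x) (hy : 0 ≤ a + b * y)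
    (hxz : x ≤ z) (hzy : z ≤ y) : 0 ≤ a + b * z := by
  rcases hxz.eq_or_lt with rfl | hxz
  · exact hx
  have hcomb : (y - x) * (a + b * z) = (y - z) * (a + b * x) + (z - x) * (a + b * y) := by ring
  have hprod : 0 ≤ (y - x) * (a + b * z) := by
    rw [hcomb]
    exact add_nonneg (mul_nonneg (sub_nonneg.2 hzy) hx) (mul_nonneg (sub_nonneg.2 hxz.le) hy)
  exact nonneg_of_mul_nonneg_right hprod (by linarith)

/-- Probability that the bit-flipping mechanism outputs `1` on a Bernoulli(`p`) profile. -/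
def flipOutput (p α : ℝ) : ℝ := p * (1 - α) + (1 - p) * α

lemma flipOutput_one_sub (p α : ℝ) : flipOutput (1 - p) α = (1 - p) * (1 - α) + p * α := by
  unfold flipOutput; ring

lemma privConstraints_iff (ε p₁ p₂ α : ℝ) :
    PrivConstraints ε p₁ p₂ α ↔
      Real.exp (-ε) * flipOutput p₂ α ≤ flipOutput p₁ α ∧
      flipOutput p₁ α ≤ Real.exp ε * flipOutput p₂ α ∧
      Real.exp (-ε) * flipOutput (1 - p₂) α ≤ flipOutput (1 - p₁) α ∧
      flipOutput (1 - p₁) α ≤ Real.exp ε * flipOutput (1 - p₂) α := by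
  rw [flipOutput_one_sub, flipOutput_one_sub]
  rfl

lemma flipOutput_half (p : ℝ) : flipOutput p (1 / 2) = 1 / 2 := by
  unfold flipOutput; ring

lemma mul_flipOutput_le_of_le_of_le_half {c d r s α α' : ℝ}
    (h : c * flipOutput r α ≤ d * flipOutput s α) (hcd : c ≤ d) (hαα' : α ≤ α')
    (hα' : α' ≤ 1 / 2) : c * flipOutput r α' ≤ d * flipOutput s α' := by
  have hhalf : c * flipOutput r (1 / 2) ≤ d * flipOutput s (1 / 2) := by
    rw [flipOutput_half, flipOutput_half]
    linarith
  unfold flipOutput at *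
  have key := affine_nonneg_of_mem_Icc (a := d * s - c * r)
    (b := d * (1 - 2 * s) - c * (1 - 2 * r)) (by linarith) (by linarith) hαα' hα'
  linarith

theorem priv_constraints_monotone_general (p₁ p₂ ε α : ℝ)
    (hε : 0 ≤ ε)
    (h : PrivConstraints ε p₁ p₂ α) :
    ∀ α' : ℝ, α ≤ α' → α' ≤ 1 / 2 → PrivConstraints ε p₁ p₂ α' := by
  intro α' hαα' hα'
  have hlow : Real.exp (-ε) ≤ 1 := Real.exp_le_one_iff.2 (neg_nonpos.2 hε)
  have hhigh : 1 ≤ Real.exp ε := Real.one_le_exp hε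
  rw [privConstraints_iff] at h ⊢
  obtain ⟨h₁, h₂, h₃, h₄⟩ := h
  refine ⟨?_, ?_, ?_, ?_⟩
  · simpa only [one_mul] using mul_flipOutput_le_of_le_of_le_half
      (h₁.trans_eq (one_mul _).symm) hlow hαα' hα'
  · simpa only [one_mul] using mul_flipOutput_le_of_le_of_le_half
      ((one_mul _).trans_le h₂) hhigh hαα' hα'
  · simpa only [one_mul] using mul_flipOutput_le_of_le_of_le_half
      (h₃.trans_eq (one_mul _).symm) hlow hαα' hα'
  · simpa only [one_mul] using mul_flipOutput_le_of_le_of_le_half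
      ((one_mul _).trans_le h₄) hhigh hαα' hα'

/-- Privacy-level monotonicity of the flip probability: if `α ∈ [0, 1/2]` satisfies
the two-sided privacy constraints at level `ε`, then so does every `α'` with
`α ≤ α' ≤ 1/2`. -/
theorem priv_constraints_monotone (p₁ p₂ ε α : ℝ)
    (hp₁ : p₁ ∈ Set.Icc (0:ℝ) 1) (hp₂ : p₂ ∈ Set.Icc (0:ℝ) 1) (hε : 0 ≤ ε)
    (hα : α ∈ Set.Icc (0:ℝ) (1 / 2))
    (h : PrivConstraints ε p₁ p₂ α) :
    ∀ α' : ℝ, α ≤ α' → α' ≤ 1 / 2 → PrivConstraints ε p₁ p₂ α' :=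
  priv_constraints_monotone_general p₁ p₂ ε α hε h
end

section
/- Closed-form solution of the first binding privacy constraint: Let 0 ≤ p_i ≤ p_j ≤ 1 and ε > 0 with p_j > exp(ε)·p_i, and set α₁ = (p_j − exp(ε)·p_i)/(2·(p_j − exp(ε)·p_i) − (1 − exp(ε))). Then α₁ ∈ [0, 1/2) and α₁ satisfies the equality p_i·(1 − α₁) + (1 − p_i)·α₁ = exp(−ε)·(p_j·(1 − α₁) + (1 − p_j)·α₁). -/
/-- Closed-form solution of the first binding privacy constraint: for
`0 ≤ p_i ≤ p_j ≤ 1`, `ε > 0` and `p_j > exp(ε)·p_i`, the value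
`α₁ = (p_j − exp(ε)p_i)/(2(p_j − exp(ε)p_i) − (1 − exp ε))` lies in `[0, 1/2)` and
makes the first privacy constraint hold with equality. -/
theorem first_constraint_closed_form (pi pj ε : ℝ)
    (h0 : 0 ≤ pi) (hij : pi ≤ pj) (hj1 : pj ≤ 1) (hε : 0 < ε)
    (hbind : Real.exp ε * pi < pj) :
    (pj - Real.exp ε * pi) / (2 * (pj - Real.exp ε * pi) - (1 - Real.exp ε))
        ∈ Set.Ico (0:ℝ) (1 / 2) ∧
      (let α₁ := (pj - Real.exp ε * pi) / (2 * (pj - Real.exp ε * pi) - (1 - Real.exp ε));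
        pi * (1 - α₁) + (1 - pi) * α₁ =
          Real.exp (-ε) * (pj * (1 - α₁) + (1 - pj) * α₁)) := by
  have hE : 1 < Real.exp ε := by
    linarith [Real.add_one_le_exp ε]
  have hN : 0 < pj - Real.exp ε * pi := by linarith
  have hD : 0 < 2 * (pj - Real.exp ε * pi) - (1 - Real.exp ε) := by linarith
  constructor
  · constructor
    · exact div_nonneg hN.le hD.le
    · rw [div_lt_iff₀ hD]; linarith
  · intro α₁
    have hne : Real.exp ε ≠ 0 := (Real.exp_pos ε).ne'
    rw [Real.exp_neg]
    show pi * (1 - _) + (1 - pi) * _ = _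
    have ha : α₁ * (2 * (pj - Real.exp ε * pi) - (1 - Real.exp ε)) = pj - Real.exp ε * pi :=
      div_mul_cancel₀ _ hD.ne'
    have hi : (Real.exp ε)⁻¹ * Real.exp ε = 1 := inv_mul_cancel₀ hne
    linear_combination (Real.exp ε)⁻¹ * ha - (pi + α₁ - 2 * α₁ * pi) * hi
end
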